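/- Let u, v ∈ ℝ³ be linearly independent with |u|² + |v|² = 1, w = u × v, γ > 0. Then any solution r(t) of dr/dt = 4γ[ u(u·r) + v(v·r) + 2w − r ] converges to 2w as t → ∞, independently of the initial condition r(0). -/

import Mathlib

/-!
With `w = u ⨯₃ v` orthogonal to `u` and `v`, the deviation `s = r - 2 • w` obeys
`s' = -4γ (I - P) s` with `P = u uᵀ + v vᵀ`. A Gram-determinant computation and Cauchy–Schwarz give
`P ≤ (1 - |w|²) I`, so `|s|²' ≤ -8γ|w|² |s|²` and `|s|²` decays exponentially; linear independence
of `u`, `v` is exactly `w ≠ 0`.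
-/

noncomputable section

/-- Euclidean inner product on ℝ³. -/
def dot3 (a b : Fin 3 → ℝ) : ℝ := a 0 * b 0 + a 1 * b 1 + a 2 * b 2

/-- Cross product on ℝ³. -/
def cross3 (a b : Fin 3 → ℝ) : Fin 3 → ℝ :=
  ![a 1 * b 2 - a 2 * b 1, a 2 * b 0 - a 0 * b 2, a 0 * b 1 - a 1 * b 0]

open Matrix Filter Topology Real

section Algebra

variable {R : Type*}

lemma dotProduct_self_nonneg {n : Type*} [Fintype n] [Ring R] [LinearOrder R]
    [IsStrictOrderedRing R] (v : n → R) : 0 ≤ v ⬝ᵥ v :=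
  Finset.sum_nonneg fun i _ => mul_self_nonneg (v i)

lemma sq_dotProduct_le [CommRing R] [LinearOrder R] [IsStrictOrderedRing R] (w t : Fin 3 → R) :
    (w ⬝ᵥ t) ^ 2 ≤ w ⬝ᵥ w * t ⬝ᵥ t := by
  have h := cross_dot_cross w t w t
  rw [dotProduct_comm t w] at h
  nlinarith [dotProduct_self_nonneg (w ⨯₃ t)]

lemma sq_triple_product [CommRing R] (u v s : Fin 3 → R) :
    (u ⨯₃ v ⬝ᵥ s) ^ 2 = u ⨯₃ v ⬝ᵥ u ⨯₃ v * s ⬝ᵥ s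
      - (v ⬝ᵥ v * (u ⬝ᵥ s) ^ 2 - 2 * u ⬝ᵥ v * u ⬝ᵥ s * v ⬝ᵥ s + u ⬝ᵥ u * (v ⬝ᵥ s) ^ 2) := by
  have h := cross_dot_cross (u ⨯₃ v) s (u ⨯₃ v) s
  rw [cross_cross_eq_smul_sub_smul] at h
  simp only [sub_dotProduct, dotProduct_sub, smul_dotProduct, dotProduct_smul, smul_eq_mul] at h
  rw [dotProduct_comm v u, dotProduct_comm s (u ⨯₃ v)] at h
  linear_combination h

/-- Writing `t = s - (u ⬝ᵥ s) • u - (v ⬝ᵥ s) • v`, the Gram identity `sq_triple_product` turns the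
claim into `(w ⬝ᵥ t) ^ 2 ≤ t ⬝ᵥ t` for `w = u ⨯₃ v`, which is Cauchy–Schwarz because `w ⬝ᵥ w ≤ 1`. -/
lemma sq_add_sq_dotProduct_le [Field R] [LinearOrder R] [IsStrictOrderedRing R] {u v : Fin 3 → R}
    (hnorm : u ⬝ᵥ u + v ⬝ᵥ v = 1) (s : Fin 3 → R) :
    (u ⬝ᵥ s) ^ 2 + (v ⬝ᵥ s) ^ 2 ≤ (1 - u ⨯₃ v ⬝ᵥ u ⨯₃ v) * s ⬝ᵥ s := by
  set w := u ⨯₃ v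
  set t := s - (u ⬝ᵥ s) • u - (v ⬝ᵥ s) • v
  have hwt : w ⬝ᵥ t = w ⬝ᵥ s := by
    simp [t, w, dotProduct_sub, dotProduct_comm _ u, dotProduct_comm _ v, dot_self_cross,
      dot_cross_self]
  have htt : t ⬝ᵥ t = s ⬝ᵥ s - 2 * ((u ⬝ᵥ s) ^ 2 + (v ⬝ᵥ s) ^ 2)
      + (u ⬝ᵥ u * (u ⬝ᵥ s) ^ 2 + 2 * u ⬝ᵥ v * u ⬝ᵥ s * v ⬝ᵥ s + v ⬝ᵥ v * (v ⬝ᵥ s) ^ 2) := by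
    simp only [t, sub_dotProduct, dotProduct_sub, smul_dotProduct, dotProduct_smul, smul_eq_mul,
      dotProduct_comm s, dotProduct_comm v u]
    ring
  have hw : w ⬝ᵥ w ≤ 1 := by
    have h : w ⬝ᵥ w = u ⬝ᵥ u * v ⬝ᵥ v - (u ⬝ᵥ v) ^ 2 := by
      rw [cross_dot_cross, dotProduct_comm v u, sq]
    nlinarith [sq_nonneg (u ⬝ᵥ u - v ⬝ᵥ v), sq_nonneg (u ⬝ᵥ v)]
  have hCS := hwt ▸ sq_dotProduct_le w t
  have hgram : (w ⬝ᵥ s) ^ 2 = w ⬝ᵥ w * s ⬝ᵥ s - _ := sq_triple_product u v s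
  have key : (1 - w ⬝ᵥ w) * s ⬝ᵥ s - ((u ⬝ᵥ s) ^ 2 + (v ⬝ᵥ s) ^ 2) = t ⬝ᵥ t - (w ⬝ᵥ s) ^ 2 := by
    linear_combination hgram - htt - ((u ⬝ᵥ s) ^ 2 + (v ⬝ᵥ s) ^ 2) * hnorm
  linarith [mul_nonneg (sub_nonneg.2 hw) (dotProduct_self_nonneg t)]

lemma dotProduct_drift_of_orthogonal {n : Type*} [Fintype n] [CommRing R] {u v w : n → R}
    (hu : u ⬝ᵥ w = 0) (hv : v ⬝ᵥ w = 0) (c : R) (r : n → R) :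
    (r - c • w) ⬝ᵥ ((u ⬝ᵥ r) • u + (v ⬝ᵥ r) • v + c • w - r)
      = (u ⬝ᵥ (r - c • w)) ^ 2 + (v ⬝ᵥ (r - c • w)) ^ 2 - (r - c • w) ⬝ᵥ (r - c • w) := by
  simp only [sub_dotProduct, dotProduct_sub, dotProduct_add, smul_dotProduct, dotProduct_smul,
    smul_eq_mul, hu, hv, dotProduct_comm w u, dotProduct_comm w v, dotProduct_comm r u,
    dotProduct_comm r v, dotProduct_comm w r]
  ring

end Algebra

lemma HasDerivAt.dotProduct_self {n : Type*} [Fintype n] {s : ℝ → n → ℝ} {s' : n → ℝ} {t : ℝ}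
    (h : HasDerivAt s s' t) : HasDerivAt (fun τ => s τ ⬝ᵥ s τ) (2 * (s t ⬝ᵥ s')) t := by
  have hi := hasDerivAt_pi.1 h
  refine (HasDerivAt.fun_sum (u := Finset.univ) fun i _ => (hi i).fun_mul (hi i)).congr_deriv ?_
  rw [dotProduct, Finset.mul_sum]
  exact Finset.sum_congr rfl fun i _ => by ring

lemma tendsto_zero_of_tendsto_dotProduct_self {n : Type*} [Fintype n] {α : Type*} {l : Filter α}
    {s : α → n → ℝ} (h : Tendsto (fun x => s x ⬝ᵥ s x) l (𝓝 0)) : Tendsto s l (𝓝 0) := by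
  refine squeeze_zero_norm (fun x => ?_) (by simpa using h.sqrt)
  refine (pi_norm_le_iff_of_nonneg (sqrt_nonneg _)).2 fun i => ?_
  rw [Real.norm_eq_abs]
  refine abs_le_sqrt ?_
  rw [sq]
  exact Finset.single_le_sum (f := fun j => s x j * s x j) (fun j _ => mul_self_nonneg _)
    (Finset.mem_univ i)

lemma tendsto_zero_of_hasDerivAt_le_neg_mul {V V' : ℝ → ℝ} {κ : ℝ} (hκ : 0 < κ)
    (hV : ∀ t, HasDerivAt V (V' t) t) (hV' : ∀ t, V' t ≤ -κ * V t) (hV0 : ∀ t, 0 ≤ V t) :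
    Tendsto V atTop (𝓝 0) := by
  have hanti : Antitone fun t => V t * exp (κ * t) := by
    have hd : ∀ t, HasDerivAt (fun t => V t * exp (κ * t)) ((V' t + κ * V t) * exp (κ * t)) t :=
      fun t => ((hV t).fun_mul ((hasDerivAt_id t).const_mul κ).exp).congr_deriv <| by
        simp only [id]; ring
    refine antitone_of_deriv_nonpos (fun t => (hd t).differentiableAt) fun t => ?_
    rw [(hd t).deriv]
    exact mul_nonpos_of_nonpos_of_nonneg (by linarith [hV' t]) (exp_nonneg _)
  have hbound : ∀ t ≥ 0, V t ≤ V 0 * exp (-(κ * t)) := fun t ht => by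
    have := hanti ht
    simp only [mul_zero, exp_zero, mul_one] at this
    calc V t = V t * exp (κ * t) * exp (-(κ * t)) := by rw [mul_assoc, ← exp_add]; simp
      _ ≤ V 0 * exp (-(κ * t)) := by gcongr
  have hdecay : Tendsto (fun t => V 0 * exp (-(κ * t))) atTop (𝓝 0) := by
    simpa using
      (tendsto_exp_neg_atTop_nhds_zero.comp (tendsto_id.const_mul_atTop hκ)).const_mul (V 0)
  exact tendsto_of_tendsto_of_tendsto_of_le_of_le' tendsto_const_nhds hdecay
    (Eventually.of_forall hV0) (eventually_ge_atTop 0 |>.mono hbound)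

lemma dot3_eq_dotProduct (a b : Fin 3 → ℝ) : dot3 a b = a ⬝ᵥ b := by
  simp [dot3, dotProduct, Fin.sum_univ_three]

lemma cross3_eq_crossProduct (a b : Fin 3 → ℝ) : cross3 a b = a ⨯₃ b := rfl

theorem stmt6 (γ : ℝ) (hγ : 0 < γ) (u v : Fin 3 → ℝ)
    (hindep : LinearIndependent ℝ ![u, v]) (hnorm : dot3 u u + dot3 v v = 1)
    (w : Fin 3 → ℝ) (hw : w = cross3 u v)
    (r : ℝ → Fin 3 → ℝ)
    (hr : ∀ t : ℝ, HasDerivAt r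
      ((4 * γ) • (dot3 u (r t) • u + dot3 v (r t) • v + (2 : ℝ) • w - r t)) t) :
    Filter.Tendsto r Filter.atTop (nhds ((2 : ℝ) • w)) := by
  simp only [dot3_eq_dotProduct] at hnorm hr
  rw [cross3_eq_crossProduct] at hw
  have hw_pos : 0 < w ⬝ᵥ w := (dotProduct_self_nonneg w).lt_of_ne' <| dotProduct_self_eq_zero.not.2 <|
    hw ▸ crossProduct_ne_zero_iff_linearIndependent.2 hindep
  have huw : u ⬝ᵥ w = 0 := hw ▸ dot_self_cross u v
  have hvw : v ⬝ᵥ w = 0 := hw ▸ dot_cross_self u v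
  set s := fun t => r t - (2 : ℝ) • w
  have hV : ∀ t, HasDerivAt (fun τ => s τ ⬝ᵥ s τ)
      (8 * γ * ((u ⬝ᵥ s t) ^ 2 + (v ⬝ᵥ s t) ^ 2 - s t ⬝ᵥ s t)) t := fun t =>
    ((hr t).sub_const _).dotProduct_self.congr_deriv <| by
      rw [dotProduct_smul, smul_eq_mul, dotProduct_drift_of_orthogonal huw hvw]; ring
  have hV' : ∀ t, 8 * γ * ((u ⬝ᵥ s t) ^ 2 + (v ⬝ᵥ s t) ^ 2 - s t ⬝ᵥ s t)
      ≤ -(8 * γ * (w ⬝ᵥ w)) * (s t ⬝ᵥ s t) := fun t => by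
    have := hw ▸ sq_add_sq_dotProduct_le hnorm (s t)
    nlinarith
  have hs := tendsto_zero_of_tendsto_dotProduct_self <| tendsto_zero_of_hasDerivAt_le_neg_mul
    (by positivity) hV hV' fun t => dotProduct_self_nonneg (s t)
  simpa [s] using hs.add_const ((2 : ℝ) • w)

end
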